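/- Let m ≥ 1 and R ⊆ [m] × [m] be a binary relation containing a directed cycle. Then the exponential pattern with shape R is not partition regular: there exists a finite colouring of ℕ such that no x_1,...,x_m > 1 make the set {x_1,...,x_m} ∪ {x_i^{x_j} : (i,j) ∈ R} monochromatic. -/

import Mathlib

/-!
Colour `n` by `log* n mod 3`. For `2 ≤ a ≤ b` we have `2 ^ b ≤ a ^ b < 2 ^ 2 ^ (b + 1)`, so
`log* (a ^ b)` is `log* b + 1` or `log* b + 2`, and `a ^ b` never gets the colour of `b`. Along a
directed cycle of `R` some edge `(i, j)` has `x i ≤ x j` (the values cannot strictly decrease all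
the way around), so `x j` and `x i ^ x j` get different colours.
-/

def logStar (n : ℕ) : ℕ :=
  if h : n < 2 then 0 else logStar (Nat.log 2 n) + 1
decreasing_by exact Nat.log_lt_self 2 (by omega)

/-- `tower k = 2 ^ 2 ^ ⋯ ^ 2` with `k + 1` twos. -/
def tower : ℕ → ℕ
  | 0 => 2
  | k + 1 => 2 ^ tower k

lemma tower_pos : ∀ k, 0 < tower k
  | 0 => two_pos
  | _ + 1 => Nat.two_pow_pos _

lemma logStar_of_lt_two {n : ℕ} (h : n < 2) : logStar n = 0 := by
  rw [logStar, dif_pos h]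

lemma logStar_of_two_le {n : ℕ} (h : 2 ≤ n) : logStar n = logStar (Nat.log 2 n) + 1 := by
  rw [logStar, dif_neg (by omega)]

lemma logStar_le_iff_lt_tower (n k : ℕ) : logStar n ≤ k ↔ n < tower k := by
  induction k generalizing n with
  | zero =>
    by_cases hn : n < 2
    · simp [logStar_of_lt_two hn, tower, hn]
    · simp [logStar_of_two_le (not_lt.mp hn), tower, hn]
  | succ k ih =>
    by_cases hn : n < 2
    · simp only [logStar_of_lt_two hn, zero_le, true_iff, tower]
      exact hn.trans_le (Nat.one_lt_two_pow (tower_pos k).ne')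
    · rw [logStar_of_two_le (not_lt.mp hn), tower, Nat.add_le_add_iff_right, ih,
        Nat.log_lt_iff_lt_pow one_lt_two (by omega)]

lemma lt_tower_logStar (n : ℕ) : n < tower (logStar n) :=
  (logStar_le_iff_lt_tower n _).mp le_rfl

lemma logStar_mono : Monotone logStar := fun m n hmn =>
  (logStar_le_iff_lt_tower m _).mpr (hmn.trans_lt (lt_tower_logStar n))

lemma logStar_lt_of_two_pow_le {b n : ℕ} (hb : 1 ≤ b) (h : 2 ^ b ≤ n) :
    logStar b < logStar n := by
  have hn : 2 ≤ n := (Nat.le_self_pow (by omega) 2).trans h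
  rw [logStar_of_two_le hn, Nat.lt_succ_iff]
  exact logStar_mono (Nat.le_log_of_pow_le one_lt_two h)

lemma logStar_le_add_two_of_lt {b n : ℕ} (h : n < 2 ^ 2 ^ (b + 1)) :
    logStar n ≤ logStar b + 2 := by
  rw [logStar_le_iff_lt_tower, tower, tower]
  have hb : b + 1 ≤ tower (logStar b) := lt_tower_logStar b
  exact h.trans_le (Nat.pow_le_pow_right two_pos (Nat.pow_le_pow_right two_pos hb))

lemma mul_self_lt_two_pow_succ (b : ℕ) : b * b < 2 ^ (b + 1) := by
  induction b with
  | zero => simp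
  | succ b ih =>
    have hb : b + 1 ≤ 2 ^ b := Nat.lt_two_pow_self
    rw [pow_succ]
    nlinarith [pow_succ 2 b]

lemma pow_lt_two_pow_two_pow_succ {a b : ℕ} (hab : a ≤ b) : a ^ b < 2 ^ 2 ^ (b + 1) :=
  calc a ^ b ≤ (2 ^ b) ^ b := Nat.pow_le_pow_left (hab.trans Nat.lt_two_pow_self.le) b
    _ = 2 ^ (b * b) := (pow_mul 2 b b).symm
    _ < 2 ^ 2 ^ (b + 1) := Nat.pow_lt_pow_right one_lt_two (mul_self_lt_two_pow_succ b)

lemma logStar_pow_eq_add_one_or_add_two {a b : ℕ} (ha : 2 ≤ a) (hab : a ≤ b) :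
    logStar (a ^ b) = logStar b + 1 ∨ logStar (a ^ b) = logStar b + 2 := by
  have lower : logStar b < logStar (a ^ b) :=
    logStar_lt_of_two_pow_le (by omega) (Nat.pow_le_pow_left ha b)
  have upper := logStar_le_add_two_of_lt (pow_lt_two_pow_two_pow_succ hab)
  omega

lemma exists_mem_le_of_cycle {α β : Type*} [LinearOrder β] {R : Set (α × α)} {l : ℕ}
    (hl : 0 < l) {y : ℕ → α} (hR : ∀ i < l, (y i, y (i + 1)) ∈ R) (hy : y l = y 0)
    (w : α → β) : ∃ p ∈ R, w p.1 ≤ w p.2 := by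
  by_contra! hdec
  have descent : ∀ i, i + 1 ≤ l → w (y (i + 1)) < w (y 0) := by
    intro i
    induction i with
    | zero => exact fun h => hdec _ (hR 0 h)
    | succ i ih => exact fun h => (hdec _ (hR (i + 1) h)).trans (ih (by omega))
  have := descent (l - 1) (by omega)
  rw [Nat.sub_add_cancel hl, hy] at this
  exact this.false

theorem cycle_not_partition_regular_general (m : ℕ)
    (R : Set (Fin m × Fin m))
    (hcyc : ∃ l : ℕ, 0 < l ∧ ∃ y : ℕ → Fin m,
      (∀ i < l, (y i, y (i + 1)) ∈ R) ∧ y l = y 0) :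
    ∃ (k : ℕ) (f : ℕ → Fin k), ∀ x : Fin m → ℕ, (∀ i, 1 < x i) →
      ¬ ∃ c : Fin k, (∀ i, f (x i) = c) ∧
        ∀ p : Fin m × Fin m, p ∈ R → f (x p.1 ^ x p.2) = c := by
  refine ⟨3, fun n => Fin.ofNat 3 (logStar n), fun x hx ⟨c, hvert, hedge⟩ => ?_⟩
  obtain ⟨l, hl, y, hR, hy⟩ := hcyc
  obtain ⟨⟨i, j⟩, hij, hle : x i ≤ x j⟩ := exists_mem_le_of_cycle hl hR hy x
  have same_colour := congrArg Fin.val ((hedge _ hij).trans (hvert j).symm)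
  simp only [Fin.val_ofNat] at same_colour
  rcases logStar_pow_eq_add_one_or_add_two (hx i) hle with h | h <;> omega

/-- If the shape relation R contains a directed cycle, the exponential pattern with
shape R is not partition regular. -/
theorem cycle_not_partition_regular (m : ℕ) (hm : 1 ≤ m)
    (R : Set (Fin m × Fin m))
    (hcyc : ∃ l : ℕ, 0 < l ∧ ∃ y : ℕ → Fin m,
      (∀ i < l, (y i, y (i + 1)) ∈ R) ∧ y l = y 0) :
    ∃ (k : ℕ) (f : ℕ → Fin k), ∀ x : Fin m → ℕ, (∀ i, 1 < x i) →
      ¬ ∃ c : Fin k, (∀ i, f (x i) = c) ∧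
        ∀ p : Fin m × Fin m, p ∈ R → f (x p.1 ^ x p.2) = c :=
  cycle_not_partition_regular_general m R hcyc
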